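/- arXiv:1204.5399 — 2 statements merged into one kernel-verified Lean document; each statement's English description precedes it below -/
import Mathlib

section
/- Let U and V be n×n row-stochastic matrices (all entries nonnegative and every row sums to 1), and for a row-stochastic matrix M define δ(M) = (1/2) · max over pairs of rows i, j of Σ_k |M_{i,k} − M_{j,k}|. Then δ(U·V) ≤ δ(U) · δ(V). -/
open Finset

/-- A real matrix is row-stochastic if all entries are nonnegative and every row sums to 1. -/
def RowStochastic {n m : ℕ} (M : Matrix (Fin n) (Fin m) ℝ) : Prop :=
  (∀ i j, 0 ≤ M i j) ∧ ∀ i, ∑ j, M i j = 1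

/-- δ(M) = (1/2) · max over pairs of rows i, j of Σ_k |M_{i,k} − M_{j,k}|. -/
noncomputable def delta {n m : ℕ} [NeZero n] (M : Matrix (Fin n) (Fin m) ℝ) : ℝ :=
  (1 / 2) *
    Finset.univ.sup' Finset.univ_nonempty
      (fun p : Fin n × Fin n => ∑ k, |M p.1 k - M p.2 k|)

/-!
For rows `i, j` of `U`, the difference `a = U i - U j` has total mass zero, so its positive and
negative parts both have mass `c = ‖a‖₁ / 2 ≤ δ(U)`. Coupling them gives
`c • (a ᵥ* V) = ∑ s t, a⁺ s * a⁻ t • (V s - V t)`, hence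
`‖a ᵥ* V‖₁ ≤ c * max_{s,t} ‖V s - V t‖₁ ≤ δ(U) * 2 δ(V)`.
-/

section DobrushinBound

variable {ι κ : Type*} [Fintype ι] [Fintype κ]

lemma sum_sum_mul_mul_sub (p q x : ι → ℝ) :
    ∑ s, ∑ t, p s * q t * (x s - x t) =
      (∑ t, q t) * ∑ s, p s * x s - (∑ s, p s) * ∑ t, q t * x t := by
  simp only [mul_sub, sum_sub_distrib, mul_sum, sum_mul]
  rw [sum_comm (f := fun s t => p s * q t * x t)]
  congr 1 <;> exact sum_congr rfl fun _ _ => sum_congr rfl fun _ _ => by ring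

lemma sum_posPart_eq_sum_negPart {a : ι → ℝ} (ha : ∑ s, a s = 0) :
    ∑ s, (a s)⁺ = ∑ s, (a s)⁻ := by
  rw [← sub_eq_zero, ← sum_sub_distrib, ← ha]
  simp only [posPart_sub_negPart]

lemma sum_abs_eq_two_mul_sum_posPart {a : ι → ℝ} (ha : ∑ s, a s = 0) :
    ∑ s, |a s| = 2 * ∑ s, (a s)⁺ := by
  simp only [← posPart_add_negPart, sum_add_distrib, ← sum_posPart_eq_sum_negPart ha]
  ring

theorem sum_abs_sum_mul_le {a : ι → ℝ} (ha : ∑ s, a s = 0) (V : ι → κ → ℝ) {D : ℝ}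
    (hV : ∀ s t, ∑ k, |V s k - V t k| ≤ D) :
    ∑ k, |∑ s, a s * V s k| ≤ (∑ s, |a s|) / 2 * D := by
  set c := ∑ s, (a s)⁺ with hc
  have hc' : ∑ s, (a s)⁻ = c := (sum_posPart_eq_sum_negPart ha).symm
  rw [sum_abs_eq_two_mul_sum_posPart ha, mul_div_cancel_left₀ _ two_ne_zero]
  rcases (sum_nonneg fun s _ => posPart_nonneg (a s) : 0 ≤ c).eq_or_lt with hc0 | hc0
  · have h_eq_zero : ∀ s, a s = 0 := fun s => by
      rw [← posPart_sub_negPart (a s),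
        (sum_eq_zero_iff_of_nonneg fun s _ => posPart_nonneg (a s)).1 hc0.symm s (mem_univ s),
        (sum_eq_zero_iff_of_nonneg fun s _ => negPart_nonneg (a s)).1 (hc'.trans hc0.symm) s
          (mem_univ s), sub_zero]
    simp [h_eq_zero]
  have h_coupling : ∀ k, c * ∑ s, a s * V s k =
      ∑ s, ∑ t, (a s)⁺ * (a t)⁻ * (V s k - V t k) := fun k => by
    rw [sum_sum_mul_mul_sub, hc', ← hc, ← mul_sub, ← sum_sub_distrib]
    simp only [← sub_mul, posPart_sub_negPart]
  refine le_of_mul_le_mul_left ?_ hc0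
  calc c * ∑ k, |∑ s, a s * V s k|
      = ∑ k, |∑ s, ∑ t, (a s)⁺ * (a t)⁻ * (V s k - V t k)| := by
        rw [mul_sum]
        exact sum_congr rfl fun k _ => by rw [← h_coupling, abs_mul, abs_of_pos hc0]
    _ ≤ ∑ k, ∑ s, ∑ t, (a s)⁺ * (a t)⁻ * |V s k - V t k| := by
        refine sum_le_sum fun k _ => (abs_sum_le_sum_abs _ _).trans <| sum_le_sum fun s _ =>
          (abs_sum_le_sum_abs _ _).trans <| sum_le_sum fun t _ => ?_
        rw [abs_mul, abs_mul, abs_of_nonneg (posPart_nonneg _), abs_of_nonneg (negPart_nonneg _)]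
    _ = ∑ s, ∑ t, (a s)⁺ * (a t)⁻ * ∑ k, |V s k - V t k| := by
        simp only [mul_sum]
        rw [sum_comm]
        exact sum_congr rfl fun s _ => sum_comm
    _ ≤ ∑ s, ∑ t, (a s)⁺ * (a t)⁻ * D := by
        gcongr with s _ t _
        exact hV s t
    _ = c * (c * D) := by
        simp only [← sum_mul, ← mul_sum, hc', ← hc]
        ring

end DobrushinBound

section Delta

variable {n m : ℕ} [NeZero n]

lemma delta_le_iff {M : Matrix (Fin n) (Fin m) ℝ} {d : ℝ} :
    delta M ≤ d ↔ ∀ i j, ∑ k, |M i k - M j k| ≤ 2 * d := by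
  rw [delta, one_div, inv_mul_le_iff₀ two_pos, sup'_le_iff]
  simp only [mem_univ, true_implies, Prod.forall]

lemma sum_abs_sub_le_two_mul_delta (M : Matrix (Fin n) (Fin m) ℝ) (i j : Fin n) :
    ∑ k, |M i k - M j k| ≤ 2 * delta M :=
  delta_le_iff.1 le_rfl i j

lemma delta_nonneg (M : Matrix (Fin n) (Fin m) ℝ) : 0 ≤ delta M := by
  simpa using sum_abs_sub_le_two_mul_delta M 0 0

end Delta

theorem delta_mul_le_general {n : ℕ} [NeZero n] (U V : Matrix (Fin n) (Fin n) ℝ)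
    (hU : RowStochastic U) :
    delta (U * V) ≤ delta U * delta V := by
  refine delta_le_iff.2 fun i j => ?_
  have h_mass : ∑ s, (U i s - U j s) = 0 := by simp only [sum_sub_distrib, hU.2, sub_self]
  calc ∑ k, |(U * V) i k - (U * V) j k|
      = ∑ k, |∑ s, (U i s - U j s) * V s k| := by
        simp only [Matrix.mul_apply, sub_mul, sum_sub_distrib]
    _ ≤ (∑ s, |U i s - U j s|) / 2 * (2 * delta V) :=
        sum_abs_sum_mul_le h_mass V (sum_abs_sub_le_two_mul_delta V)
    _ ≤ delta U * (2 * delta V) := by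
        have hUij := sum_abs_sub_le_two_mul_delta U i j
        have hV0 := delta_nonneg V
        gcongr
        linarith
    _ = 2 * (delta U * delta V) := by ring

theorem delta_mul_le {n : ℕ} [NeZero n] (U V : Matrix (Fin n) (Fin n) ℝ)
    (hU : RowStochastic U) (hV : RowStochastic V) :
    delta (U * V) ≤ delta U * delta V :=
  delta_mul_le_general U V hU
end

section
/- Fix n ≥ 1 experts, z ≥ 2 outcomes, and ε > 0. Let f_1⁽⁰⁾, …, f_n⁽⁰⁾ ∈ ℝ^z be probability vectors, and for t ≥ 1 define p_{i,j}⁽ᵗ⁾ = (ε + D(f_i⁽ᵗ⁻¹⁾, f_j⁽ᵗ⁻¹⁾))⁻¹ / Σ_{k=1}^{n} (ε + D(f_i⁽ᵗ⁻¹⁾, f_k⁽ᵗ⁻¹⁾))⁻¹ and f_i⁽ᵗ⁾ = Σ_{j=1}^{n} p_{i,j}⁽ᵗ⁾ · f_j⁽ᵗ⁻¹⁾, where D(f, g) = sqrt( (Σ_{k=1}^{z} (f_k − g_k)²) / z ). Then a consensus is reached: there exists a probability vector f* ∈ ℝ^z such that for every expert i, the sequence f_i⁽ᵗ⁾ converges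 to f* as t → ∞; in particular, for all experts i and j, f_i⁽ᵗ⁾ − f_j⁽ᵗ⁾ → 0 as t → ∞. -/
open Finset

/-- A probability vector: nonnegative entries summing to 1. -/
def ProbVec {z : ℕ} (f : Fin z → ℝ) : Prop :=
  (∀ k, 0 ≤ f k) ∧ ∑ k, f k = 1

/-- Root-mean-square deviation between two opinions. -/
noncomputable def D {z : ℕ} (f g : Fin z → ℝ) : ℝ :=
  Real.sqrt ((∑ k, (f k - g k) ^ 2) / z)

/-- The weight that expert `i` assigns to expert `j`, given current opinions `F`:
`p_{i,j} = (ε + D(F i, F j))⁻¹ / Σ_m (ε + D(F i, F m))⁻¹`. -/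
noncomputable def weight {n z : ℕ} (ε : ℝ) (F : Fin n → Fin z → ℝ) (i j : Fin n) : ℝ :=
  (ε + D (F i) (F j))⁻¹ / ∑ m, (ε + D (F i) (F m))⁻¹

/-- The opinions after `t` rounds of the consensual updating process. -/
noncomputable def opinions {n z : ℕ} (ε : ℝ) (F0 : Fin n → Fin z → ℝ) :
    ℕ → Fin n → Fin z → ℝ
  | 0 => F0
  | t + 1 => fun i k => ∑ j, weight ε (opinions ε F0 t) i j * opinions ε F0 t j k


/-!
Opinions stay in the probability simplex, where `D ≤ 1`, so every weight is at least
`δ = ε / (n (ε + 1))`. In each coordinate the maximum over the experts then drops by at least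
`δ` times the spread while the minimum never decreases, so the spread shrinks by the factor
`1 - δ` each round and the nested intervals `[min, max]` close down on a common limit.
-/

open Filter Topology

section Averaging

variable {ι : Type*} [Fintype ι] {w v : ι → ℝ}

lemma ciInf_le_sum_mul (hw₀ : ∀ j, 0 ≤ w j) (hw₁ : ∑ j, w j = 1) :
    ⨅ j, v j ≤ ∑ j, w j * v j :=
  calc ⨅ j, v j = ∑ j, w j * ⨅ j, v j := by rw [← sum_mul, hw₁, one_mul]
    _ ≤ ∑ j, w j * v j := by
      gcongr with j
      exact hw₀ j
      exact ciInf_le (Finite.bddBelow_range v) j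

lemma sum_mul_le_ciSup_sub (hw₀ : ∀ j, 0 ≤ w j) (hw₁ : ∑ j, w j = 1) (j₀ : ι) :
    ∑ j, w j * v j ≤ (⨆ j, v j) - w j₀ * ((⨆ j, v j) - v j₀) := by
  have hgap : (⨆ j, v j) - ∑ j, w j * v j = ∑ j, w j * ((⨆ j, v j) - v j) := by
    simp only [mul_sub, sum_sub_distrib, ← sum_mul, hw₁, one_mul]
  have hle : w j₀ * ((⨆ j, v j) - v j₀) ≤ ∑ j, w j * ((⨆ j, v j) - v j) :=
    single_le_sum (f := fun j => w j * ((⨆ j, v j) - v j))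
      (fun j _ => mul_nonneg (hw₀ j) (sub_nonneg.2 (le_ciSup (Finite.bddAbove_range v) j)))
      (mem_univ j₀)
  linarith

end Averaging

lemma exists_tendsto_of_antitone_of_monotone {M m : ℕ → ℝ} (hM : Antitone M) (hm : Monotone m)
    (hmM : ∀ t, m t ≤ M t) (hgap : Tendsto (fun t => M t - m t) atTop (𝓝 0)) :
    ∃ L, Tendsto M atTop (𝓝 L) ∧ Tendsto m atTop (𝓝 L) := by
  have hM_bdd : BddBelow (Set.range M) := ⟨m 0, by
    rintro _ ⟨t, rfl⟩
    exact (hm t.zero_le).trans (hmM t)⟩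
  have hM_lim := tendsto_atTop_ciInf hM hM_bdd
  refine ⟨_, hM_lim, ?_⟩
  simpa using hM_lim.sub hgap

section Iteration

variable {ι : Type*} [Fintype ι] [Nonempty ι] {x : ℕ → ι → ℝ} {W : ℕ → ι → ι → ℝ} {δ : ℝ}

lemma iteration_ciSup_succ_le (hδ : 0 ≤ δ) (hW : ∀ t i j, δ ≤ W t i j)
    (hW₁ : ∀ t i, ∑ j, W t i j = 1) (hx : ∀ t i, x (t + 1) i = ∑ j, W t i j * x t j) (t : ℕ) :
    ⨆ i, x (t + 1) i ≤ (⨆ i, x t i) - δ * ((⨆ i, x t i) - ⨅ i, x t i) := by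
  obtain ⟨j₀, hj₀⟩ := exists_eq_ciInf_of_finite (f := x t)
  refine ciSup_le fun i => ?_
  have hgap : 0 ≤ (⨆ i, x t i) - x t j₀ :=
    sub_nonneg.2 (le_ciSup (Finite.bddAbove_range _) j₀)
  calc x (t + 1) i ≤ (⨆ j, x t j) - W t i j₀ * ((⨆ j, x t j) - x t j₀) := by
        rw [hx]
        exact sum_mul_le_ciSup_sub (fun j => hδ.trans (hW t i j)) (hW₁ t i) j₀
    _ ≤ (⨆ i, x t i) - δ * ((⨆ i, x t i) - ⨅ i, x t i) := by
        rw [← hj₀]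
        nlinarith [hW t i j₀]

lemma iteration_ciInf_le_succ (hδ : 0 ≤ δ) (hW : ∀ t i j, δ ≤ W t i j)
    (hW₁ : ∀ t i, ∑ j, W t i j = 1) (hx : ∀ t i, x (t + 1) i = ∑ j, W t i j * x t j) (t : ℕ) :
    ⨅ i, x t i ≤ ⨅ i, x (t + 1) i :=
  le_ciInf fun i => (hx t i).symm ▸ ciInf_le_sum_mul (fun j => hδ.trans (hW t i j)) (hW₁ t i)

lemma tendsto_iteration_ciSup_sub_ciInf (hδ : 0 < δ) (hW : ∀ t i j, δ ≤ W t i j)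
    (hW₁ : ∀ t i, ∑ j, W t i j = 1) (hx : ∀ t i, x (t + 1) i = ∑ j, W t i j * x t j) :
    Tendsto (fun t => (⨆ i, x t i) - ⨅ i, x t i) atTop (𝓝 0) := by
  obtain ⟨i₀⟩ := ‹Nonempty ι›
  have hδ₁ : δ ≤ 1 := (hW 0 i₀ i₀).trans <| (hW₁ 0 i₀) ▸
    single_le_sum (fun j _ => hδ.le.trans (hW 0 i₀ j)) (mem_univ i₀)
  have hgap_nonneg : ∀ t, 0 ≤ (⨆ i, x t i) - ⨅ i, x t i := fun t =>
    sub_nonneg.2 (ciInf_le_ciSup (Finite.bddBelow_range _) (Finite.bddAbove_range _))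
  have hgap : ∀ t, (⨆ i, x t i) - ⨅ i, x t i ≤ (1 - δ) ^ t * ((⨆ i, x 0 i) - ⨅ i, x 0 i) := by
    intro t
    induction t with
    | zero => simp
    | succ t ih =>
      have hsup := iteration_ciSup_succ_le hδ.le hW hW₁ hx t
      have hinf := iteration_ciInf_le_succ hδ.le hW hW₁ hx t
      calc (⨆ i, x (t + 1) i) - ⨅ i, x (t + 1) i ≤ (1 - δ) * ((⨆ i, x t i) - ⨅ i, x t i) := by
            linarith
        _ ≤ (1 - δ) * ((1 - δ) ^ t * ((⨆ i, x 0 i) - ⨅ i, x 0 i)) := by gcongr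
        _ = _ := by ring
  have hgeom : Tendsto (fun t => (1 - δ) ^ t * ((⨆ i, x 0 i) - ⨅ i, x 0 i)) atTop (𝓝 0) := by
    simpa using (tendsto_pow_atTop_nhds_zero_of_lt_one (by linarith) (by linarith)).mul_const
      ((⨆ i, x 0 i) - ⨅ i, x 0 i)
  exact tendsto_of_tendsto_of_tendsto_of_le_of_le tendsto_const_nhds hgeom hgap_nonneg hgap

lemma exists_tendsto_of_iteration (hδ : 0 < δ) (hW : ∀ t i j, δ ≤ W t i j)
    (hW₁ : ∀ t i, ∑ j, W t i j = 1) (hx : ∀ t i, x (t + 1) i = ∑ j, W t i j * x t j) :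
    ∃ L, ∀ i, Tendsto (fun t => x t i) atTop (𝓝 L) := by
  obtain ⟨L, hM, hm⟩ := exists_tendsto_of_antitone_of_monotone
    (antitone_nat_of_succ_le fun t => by
      have := iteration_ciSup_succ_le hδ.le hW hW₁ hx t
      have := ciInf_le_ciSup (Finite.bddBelow_range (x t)) (Finite.bddAbove_range (x t))
      nlinarith)
    (monotone_nat_of_le_succ (iteration_ciInf_le_succ hδ.le hW hW₁ hx))
    (fun t => ciInf_le_ciSup (Finite.bddBelow_range (x t)) (Finite.bddAbove_range (x t)))
    (tendsto_iteration_ciSup_sub_ciInf hδ hW hW₁ hx)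
  exact ⟨L, fun i => tendsto_of_tendsto_of_tendsto_of_le_of_le hm hM
    (fun t => ciInf_le (Finite.bddBelow_range _) i) (fun t => le_ciSup (Finite.bddAbove_range _) i)⟩

lemma exists_tendsto_pi_of_iteration {κ : Type*} {x : ℕ → ι → κ → ℝ} (hδ : 0 < δ)
    (hW : ∀ t i j, δ ≤ W t i j) (hW₁ : ∀ t i, ∑ j, W t i j = 1)
    (hx : ∀ t i k, x (t + 1) i k = ∑ j, W t i j * x t j k) :
    ∃ L, ∀ i, Tendsto (fun t => x t i) atTop (𝓝 L) := by
  choose L hL using fun k => exists_tendsto_of_iteration (x := fun t i => x t i k) hδ hW hW₁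
    (fun t i => hx t i k)
  exact ⟨L, fun i => tendsto_pi_nhds.2 fun k => hL k i⟩

end Iteration

lemma D_nonneg {z : ℕ} (f g : Fin z → ℝ) : 0 ≤ D f g := Real.sqrt_nonneg _

lemma D_le_one {z : ℕ} {f g : Fin z → ℝ} (hf : f ∈ Set.Icc 0 1) (hg : g ∈ Set.Icc 0 1) :
    D f g ≤ 1 := by
  have hsq : ∀ k, (f k - g k) ^ 2 ≤ 1 := fun k => by
    have : 0 ≤ f k := hf.1 k
    have : f k ≤ 1 := hf.2 k
    have : 0 ≤ g k := hg.1 k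
    have : g k ≤ 1 := hg.2 k
    nlinarith
  have hsum : ∑ k, (f k - g k) ^ 2 ≤ z := by
    simpa using sum_le_sum fun k (_ : k ∈ univ) => hsq k
  exact Real.sqrt_le_one.2 (div_le_one_of_le₀ hsum z.cast_nonneg)

section Weights

variable {n z : ℕ} {ε : ℝ} (F : Fin n → Fin z → ℝ)

lemma inv_add_D_pos (hε : 0 < ε) (f g : Fin z → ℝ) : 0 < (ε + D f g)⁻¹ :=
  inv_pos.2 (add_pos_of_pos_of_nonneg hε (D_nonneg f g))

lemma sum_inv_add_D_pos (hε : 0 < ε) (i : Fin n) : 0 < ∑ m, (ε + D (F i) (F m))⁻¹ :=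
  sum_pos (fun _ _ => inv_add_D_pos hε _ _) ⟨i, mem_univ i⟩

lemma weight_pos (hε : 0 < ε) (i j : Fin n) : 0 < weight ε F i j :=
  div_pos (inv_add_D_pos hε _ _) (sum_inv_add_D_pos F hε i)

lemma sum_weight (hε : 0 < ε) (i : Fin n) : ∑ j, weight ε F i j = 1 := by
  simp only [weight, ← sum_div]
  exact div_self (sum_inv_add_D_pos F hε i).ne'

lemma div_le_weight (hε : 0 < ε) {B : ℝ} {i : Fin n} (hB : ∀ j, D (F i) (F j) ≤ B)
    (j : Fin n) : ε / (n * (ε + B)) ≤ weight ε F i j := by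
  have hsum : ∑ m, (ε + D (F i) (F m))⁻¹ ≤ n * ε⁻¹ := by
    simpa using sum_le_sum fun m (_ : m ∈ univ) =>
      inv_anti₀ hε (le_add_of_nonneg_right (D_nonneg (F i) (F m)))
  calc ε / (n * (ε + B)) = (ε + B)⁻¹ / (n * ε⁻¹) := by field_simp
    _ ≤ weight ε F i j :=
      div_le_div₀ (inv_add_D_pos hε _ _).le
        (inv_anti₀ (by linarith [D_nonneg (F i) (F j)]) (by linarith [hB j]))
        (sum_inv_add_D_pos F hε i) hsum

end Weights

section Opinions

variable {n z : ℕ} {ε : ℝ} {F0 : Fin n → Fin z → ℝ}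

lemma opinions_succ (t : ℕ) (i : Fin n) :
    opinions ε F0 (t + 1) i = ∑ j, weight ε (opinions ε F0 t) i j • opinions ε F0 t j := by
  ext k
  simp [opinions]

lemma opinions_mem_stdSimplex (hε : 0 < ε) (hF0 : ∀ i, ProbVec (F0 i)) (t : ℕ) (i : Fin n) :
    opinions ε F0 t i ∈ stdSimplex ℝ (Fin z) := by
  induction t generalizing i with
  | zero => exact hF0 i
  | succ t ih =>
    rw [opinions_succ]
    exact (convex_stdSimplex ℝ (Fin z)).sum_mem (fun j _ => (weight_pos _ hε i j).le)
      (sum_weight _ hε i) fun j _ => ih j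

end Opinions

theorem consensus_reached_general {n z : ℕ} (hn : 1 ≤ n)
    {ε : ℝ} (hε : 0 < ε) (F0 : Fin n → Fin z → ℝ) (hF0 : ∀ i, ProbVec (F0 i)) :
    ∃ fstar : Fin z → ℝ, ProbVec fstar ∧
      (∀ i, Filter.Tendsto (fun t => opinions ε F0 t i) Filter.atTop (nhds fstar)) ∧
      (∀ i j, Filter.Tendsto (fun t => opinions ε F0 t i - opinions ε F0 t j)
        Filter.atTop (nhds 0)) := by
  have : Nonempty (Fin n) := ⟨⟨0, hn⟩⟩
  have hsimplex := opinions_mem_stdSimplex hε hF0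
  have hweight : ∀ t i j, ε / (n * (ε + 1)) ≤ weight ε (opinions ε F0 t) i j :=
    fun t i => div_le_weight _ hε fun j =>
      D_le_one (stdSimplex_subset_Icc ℝ (hsimplex t i)) (stdSimplex_subset_Icc ℝ (hsimplex t j))
  obtain ⟨fstar, hlim⟩ := exists_tendsto_pi_of_iteration (x := opinions ε F0) (by positivity)
    hweight (fun t => sum_weight _ hε) (fun _ _ _ => rfl)
  refine ⟨fstar, ?_, hlim, fun i j => by simpa using (hlim i).sub (hlim j)⟩
  exact (isClosed_stdSimplex ℝ (Fin z)).mem_of_tendsto (hlim ⟨0, hn⟩)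
    (.of_forall fun t => hsimplex t _)

theorem consensus_reached {n z : ℕ} (hn : 1 ≤ n) (hz : 2 ≤ z)
    {ε : ℝ} (hε : 0 < ε) (F0 : Fin n → Fin z → ℝ) (hF0 : ∀ i, ProbVec (F0 i)) :
    ∃ fstar : Fin z → ℝ, ProbVec fstar ∧
      (∀ i, Filter.Tendsto (fun t => opinions ε F0 t i) Filter.atTop (nhds fstar)) ∧
      (∀ i j, Filter.Tendsto (fun t => opinions ε F0 t i - opinions ε F0 t j)
        Filter.atTop (nhds 0)) :=
  consensus_reached_general hn hε F0 hF0
end
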